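/- Let α ≥ 0, ε > 0, and suppose there exists a nonempty set S ⊆ V with b(S, 𝒢) ≤ α|S|; let γ* = max{ d(S, 𝒢) : S ⊆ V nonempty, b(S, 𝒢) ≤ α|S| }. If 0 ≤ L < γ* ≤ (1 + ε)L and S₀ maximizes S ↦ ∑_{i=1}^r m(S, G_i) − L|S| over all S ⊆ V with b(S, 𝒢) ≤ α|S|, then d(S₀, 𝒢) ≥ γ*/(1 + ε). -/

import Mathlib

/-!
Write `f(S) = ∑ᵢ m(S, Gᵢ) - L|S|`. Since `f(S) = (d(S, 𝒢) - L)|S|`, a feasible `S*` attaining `γ*`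
has `f(S*) > 0` as `L < γ*`, so the maximiser `S₀` also has `f(S₀) > 0`, i.e. `d(S₀, 𝒢) > L`.
Finally `L ≥ γ*/(1 + ε)`.
-/

/-- Number of edges of `G` with both endpoints in `S`. -/
noncomputable def edgeCnt {V : Type*} (G : SimpleGraph V) (S : Finset V) : ℕ :=
  {e ∈ G.edgeSet | ∀ v ∈ e, v ∈ S}.ncard

/-- Density of the subgraph induced by `S` in `G`. -/
noncomputable def dens {V : Type*} (G : SimpleGraph V) (S : Finset V) : ℝ :=
  (edgeCnt G S : ℝ) / (S.card : ℝ)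

/-- Total density across the graph snapshots. -/
noncomputable def densTot {V : Type*} {r : ℕ} (G : Fin r → SimpleGraph V) (S : Finset V) : ℝ :=
  ∑ i, dens (G i) S

/-- Difference between the maximum and minimum induced density. -/
noncomputable def densDiff {V : Type*} {r : ℕ} (G : Fin r → SimpleGraph V) (S : Finset V) : ℝ :=
  (⨆ i, dens (G i) S) - (⨅ i, dens (G i) S)

/-- Difference between the maximum and minimum induced edge count. -/
noncomputable def edgeDiff {V : Type*} {r : ℕ} (G : Fin r → SimpleGraph V) (S : Finset V) : ℝ :=
  (⨆ i, (edgeCnt (G i) S : ℝ)) - (⨅ i, (edgeCnt (G i) S : ℝ))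

lemma edgeCnt_empty {V : Type*} (G : SimpleGraph V) : edgeCnt G ∅ = 0 := by
  rw [edgeCnt]
  convert Set.ncard_empty (Sym2 V)
  exact Set.eq_empty_of_forall_notMem fun e ⟨_, he⟩ =>
    Finset.notMem_empty _ (he _ e.out_fst_mem)

lemma densTot_mul_card {V : Type*} {r : ℕ} (G : Fin r → SimpleGraph V) (S : Finset V) :
    densTot G S * S.card = ∑ i, (edgeCnt (G i) S : ℝ) := by
  rcases S.eq_empty_or_nonempty with rfl | hS
  · simp [edgeCnt_empty]
  · simp only [densTot, dens, ← Finset.sum_div]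
    exact div_mul_cancel₀ _ (by exact_mod_cast hS.card_pos.ne')

lemma sum_edgeCnt_sub_mul_card {V : Type*} {r : ℕ} (G : Fin r → SimpleGraph V) (L : ℝ)
    (S : Finset V) :
    (∑ i, (edgeCnt (G i) S : ℝ)) - L * S.card = (densTot G S - L) * S.card := by
  rw [← densTot_mul_card]
  ring

theorem stmt4_general {V : Type*} {r : ℕ}
    (G : Fin r → SimpleGraph V) (α ε L γstar : ℝ) (hε : 0 < ε)
    (hstar : IsGreatest
      {x : ℝ | ∃ S : Finset V, S.Nonempty ∧ edgeDiff G S ≤ α * (S.card : ℝ) ∧ densTot G S = x}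
      γstar)
    (hL : L < γstar) (hU : γstar ≤ (1 + ε) * L)
    (S₀ : Finset V)
    (hmax : ∀ S : Finset V, edgeDiff G S ≤ α * (S.card : ℝ) →
      (∑ i, (edgeCnt (G i) S : ℝ)) - L * (S.card : ℝ) ≤
        (∑ i, (edgeCnt (G i) S₀ : ℝ)) - L * (S₀.card : ℝ)) :
    γstar / (1 + ε) ≤ densTot G S₀ := by
  obtain ⟨S, hS, hSfeas, hγ⟩ := hstar.1
  have hS₀ : L < densTot G S₀ := by
    have hpos : 0 < (densTot G S - L) * S.card :=
      mul_pos (by linarith) (by exact_mod_cast hS.card_pos)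
    have hle := hmax S hSfeas
    rw [sum_edgeCnt_sub_mul_card, sum_edgeCnt_sub_mul_card] at hle
    exact sub_pos.1 (pos_of_mul_pos_left (hpos.trans_le hle) (Nat.cast_nonneg _))
  calc γstar / (1 + ε) ≤ L := (div_le_iff₀ (by linarith)).2 (by linarith)
    _ ≤ densTot G S₀ := hS₀.le

theorem stmt4 {V : Type*} [Fintype V] {r : ℕ} (hr : 1 ≤ r)
    (G : Fin r → SimpleGraph V) (α ε L γstar : ℝ) (hα : 0 ≤ α) (hε : 0 < ε)
    (hex : ∃ S : Finset V, S.Nonempty ∧ edgeDiff G S ≤ α * (S.card : ℝ))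
    (hstar : IsGreatest
      {x : ℝ | ∃ S : Finset V, S.Nonempty ∧ edgeDiff G S ≤ α * (S.card : ℝ) ∧ densTot G S = x}
      γstar)
    (hL0 : 0 ≤ L) (hL : L < γstar) (hU : γstar ≤ (1 + ε) * L)
    (S₀ : Finset V) (hfeas : edgeDiff G S₀ ≤ α * (S₀.card : ℝ))
    (hmax : ∀ S : Finset V, edgeDiff G S ≤ α * (S.card : ℝ) →
      (∑ i, (edgeCnt (G i) S : ℝ)) - L * (S.card : ℝ) ≤
        (∑ i, (edgeCnt (G i) S₀ : ℝ)) - L * (S₀.card : ℝ)) :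
    γstar / (1 + ε) ≤ densTot G S₀ :=
  stmt4_general G α ε L γstar hε hstar hL hU S₀ hmax
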